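/- Let α > 0 and λ ∈ [0,1]. If λα^(λ-1) ≤ 1 and λ > 0, then ((1-λ)α^(2λ) - (1 - λα^(λ-1))²)·(λα^(2λ-2) - λ²α^(2λ-2)) ≥ λ²α^(2λ-2)·(1 - λα^(λ-1))². -/
import Mathlib


theorem stmt_18 (a l : ℝ) (ha : 0 < a) (hl : l ∈ Set.Icc (0:ℝ) 1)
    (h1 : l * a ^ (l - 1) ≤ 1) (h2 : 0 < l) :
    ((1 - l) * a ^ (2 * l) - (1 - l * a ^ (l - 1)) ^ 2) *
        (l * a ^ (2 * l - 2) - l ^ 2 * a ^ (2 * l - 2)) ≥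
      l ^ 2 * a ^ (2 * l - 2) * (1 - l * a ^ (l - 1)) ^ 2 := by
  obtain ⟨hl0, hl1⟩ := hl
  have hs : (0:ℝ) < a ^ l := Real.rpow_pos_of_pos ha l
  have ht : (0:ℝ) < a ^ (l - 1) := Real.rpow_pos_of_pos ha (l - 1)
  have h2l : a ^ (2 * l) = a ^ l * a ^ l := by
    rw [← Real.rpow_add ha]; ring_nf
  have h2l2 : a ^ (2 * l - 2) = a ^ (l - 1) * a ^ (l - 1) := by
    rw [← Real.rpow_add ha]; ring_nf
  rcases eq_or_lt_of_le hl1 with h | h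
  · subst h
    simp only [sub_self, Real.rpow_zero] at *
    nlinarith [sq_nonneg (a ^ (2 * 1) )]
  · -- key : 1 ≤ (1-l)*a^l + l*a^(l-1)
    have key : (1:ℝ) ≤ (1 - l) * a ^ l + l * a ^ (l - 1) := by
      have := Real.geom_mean_le_arith_mean2_weighted (by linarith : (0:ℝ) ≤ 1 - l)
        h2.le hs.le ht.le (by ring)
      calc (1:ℝ) = (a ^ l) ^ (1 - l) * (a ^ (l - 1)) ^ l := by
            rw [← Real.rpow_mul ha.le, ← Real.rpow_mul ha.le, ← Real.rpow_add ha]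
            norm_num [show l * (1 - l) + (l - 1) * l = 0 by ring]
        _ ≤ (1 - l) * a ^ l + l * a ^ (l - 1) := this
    rw [h2l, h2l2]
    set s := a ^ l
    set t := a ^ (l - 1)
    have hu : 0 ≤ 1 - l * t := by linarith
    have hk : 1 - l * t ≤ (1 - l) * s := by linarith
    have hA : 0 ≤ ((1 - l) * s) ^ 2 - (1 - l * t) ^ 2 := by
      nlinarith [mul_le_mul hk hk hu (by nlinarith : (0:ℝ) ≤ (1 - l) * s)]
    nlinarith [mul_nonneg (mul_nonneg h2.le (mul_pos ht ht).le) hA]
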